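/- Let π be a policy that reaches the goal everywhere and let π' be a policy that is optimal with respect to the reward −d^π. If d^{π'}(s) = d^π(s) for every state s, then d^π(s) = d*(s) for every state s, i.e., π achieves the optimal dynamical distance to the goal from every state. -/

import Mathlib

/-- The step map induced by policy `π` in a deterministic MDP with transition `T`. -/
def stepMap {S A : Type*} (T : S → A → S) (π : S → A) : S → S := fun s => T s (π s)

/-- The dynamical distance `d^π(s)`: the least `n : ℕ` with `(stepMap T π)^[n] s = g`,
and `⊤` (infinity) if no such `n` exists. -/
noncomputable def dynDist {S A : Type*} (T : S → A → S) (g : S) (π : S → A) (s : S) : ℕ∞ :=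
  sInf {n : ℕ∞ | ∃ m : ℕ, n = (m : ℕ∞) ∧ (stepMap T π)^[m] s = g}

/-- `π` reaches the goal everywhere: the dynamical distance is finite from every state. -/
def ReachesEverywhere {S A : Type*} (T : S → A → S) (g : S) (π : S → A) : Prop :=
  ∀ s, dynDist T g π s < ⊤

/-- The loss of `π'` relative to `π` from start state `s`:
`L_π(π', s) = ∑_{i=0}^{d^{π'}(s)-1} γ^i * d^π((stepMap T π')^[i] s)`. -/
noncomputable def lossOf {S A : Type*} (T : S → A → S) (g : S) (γ : ℝ)
    (π π' : S → A) (s : S) : ℝ :=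
  ∑ i ∈ Finset.range (dynDist T g π' s).toNat,
    γ ^ i * ((dynDist T g π ((stepMap T π')^[i] s)).toNat : ℝ)

/-- `π'` is optimal with respect to the reward `-d^π`. -/
def OptimalWrt {S A : Type*} (T : S → A → S) (g : S) (γ : ℝ) (π π' : S → A) : Prop :=
  ReachesEverywhere T g π' ∧
    ∀ π'' : S → A, ReachesEverywhere T g π'' → ∀ s, lossOf T g γ π π' s ≤ lossOf T g γ π π'' s

/-- The optimal dynamical distance: the infimum of `d^π(s)` over all policies. -/
noncomputable def optDist {S A : Type*} (T : S → A → S) (g : S) (s : S) : ℕ∞ :=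
  ⨅ π : S → A, dynDist T g π s


/-!
Write `d` for `d^π = d^{π'}`. As `π'` has distance `d` itself, its loss from `s` is
`∑_{i<d(s)} γ^i (d(s) - i)`, strictly increasing in `d(s)`. Suppose an action `a` at `t ≠ g`
leads to `u` with `d(u) + 1 < d(t)`. Then the `π'`-trajectory of `u` never returns to `t`, so
rerouting `π'` through `a` at `t` still reaches the goal everywhere, and by the Bellman equation
its loss from `t` is `d(t) + γ L(u) < d(t) + γ L(f_{π'} t) = L(t)`, contradicting optimality.
Hence `d(t) ≤ d(T t a) + 1` for all `t` and `a`, and following any policy `σ` from `s` gives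
`d(s) ≤ d^σ(s)`.
-/

open Function

section

variable {S A : Type*} {T : S → A → S} {g : S}

lemma stepMap_iterate_goal (hg : ∀ a, T g a = g) (π : S → A) (n : ℕ) :
    (stepMap T π)^[n] g = g :=
  iterate_fixed (hg (π g)) n

lemma dynDist_le_natCast_iff (hg : ∀ a, T g a = g) (π : S → A) (s : S) (n : ℕ) :
    dynDist T g π s ≤ n ↔ (stepMap T π)^[n] s = g := by
  refine ⟨fun h => ?_, fun h => sInf_le ⟨n, rfl, h⟩⟩
  have hne : {n : ℕ∞ | ∃ m : ℕ, n = m ∧ (stepMap T π)^[m] s = g}.Nonempty := by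
    by_contra hempty
    rw [dynDist, Set.not_nonempty_iff_eq_empty.mp hempty, sInf_empty] at h
    exact ENat.natCast_ne_top n (top_le_iff.mp h)
  obtain ⟨m, hm, hmg⟩ := csInf_mem hne
  rw [dynDist, hm, Nat.cast_le] at h
  rw [← Nat.sub_add_cancel h, iterate_add_apply, hmg, stepMap_iterate_goal hg]

lemma dynDist_eq_zero_iff (hg : ∀ a, T g a = g) (π : S → A) (s : S) :
    dynDist T g π s = 0 ↔ s = g := by
  simpa using dynDist_le_natCast_iff hg π s 0

lemma dynDist_goal (hg : ∀ a, T g a = g) (π : S → A) : dynDist T g π g = 0 :=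
  (dynDist_eq_zero_iff hg π g).mpr rfl

lemma dynDist_stepMap_iterate (hg : ∀ a, T g a = g) (π : S → A) (s : S) (k : ℕ) :
    dynDist T g π ((stepMap T π)^[k] s) = dynDist T g π s - k := by
  refine eq_of_forall_ge_iff fun c => ?_
  induction c using ENat.recTopCoe with
  | top => simp
  | coe n => rw [tsub_le_iff_right, dynDist_le_natCast_iff hg, ← iterate_add_apply,
      ← Nat.cast_add, dynDist_le_natCast_iff hg]

lemma dynDist_eq_dynDist_stepMap_add_one (hg : ∀ a, T g a = g) (π : S → A) {s : S}
    (hs : s ≠ g) : dynDist T g π s = dynDist T g π (stepMap T π s) + 1 := by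
  have hpos : 1 ≤ dynDist T g π s :=
    Order.one_le_iff_ne_zero.mpr fun h => hs ((dynDist_eq_zero_iff hg π s).mp h)
  rw [← iterate_one (stepMap T π), dynDist_stepMap_iterate hg, Nat.cast_one,
    tsub_add_cancel_of_le hpos]

lemma dynDist_le_dynDist_iterate_add (hg : ∀ a, T g a = g) (π : S → A) (s : S) (k : ℕ) :
    dynDist T g π s ≤ dynDist T g π ((stepMap T π)^[k] s) + k := by
  rw [dynDist_stepMap_iterate hg]
  exact le_tsub_add

section update

variable [DecidableEq S]

lemma stepMap_update_self (π : S → A) (t : S) (a : A) :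
    stepMap T (update π t a) t = T t a := by
  simp [stepMap]

lemma stepMap_update_iterate_of_forall_ne (π : S → A) {t : S} (a : A) {s : S} {n : ℕ}
    (h : ∀ i < n, (stepMap T π)^[i] s ≠ t) :
    (stepMap T (update π t a))^[n] s = (stepMap T π)^[n] s := by
  induction n with
  | zero => rfl
  | succ n ih =>
    rw [iterate_succ_apply', iterate_succ_apply', ih fun i hi => h i (by omega)]
    simp [stepMap, update_of_ne (h n (by omega))]

lemma dynDist_update_of_forall_ne (hg : ∀ a, T g a = g) (π : S → A) {t : S} (a : A) {s : S}
    (h : ∀ i, (stepMap T π)^[i] s ≠ t) :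
    dynDist T g (update π t a) s = dynDist T g π s := by
  refine eq_of_forall_ge_iff fun c => ?_
  induction c using ENat.recTopCoe with
  | top => simp
  | coe n => rw [dynDist_le_natCast_iff hg, dynDist_le_natCast_iff hg,
      stepMap_update_iterate_of_forall_ne π a fun i _ => h i]

lemma lossOf_update_of_forall_ne (hg : ∀ a, T g a = g) (γ : ℝ) (ρ π : S → A) {t : S} (a : A)
    {s : S} (h : ∀ i, (stepMap T π)^[i] s ≠ t) :
    lossOf T g γ ρ (update π t a) s = lossOf T g γ ρ π s := by
  unfold lossOf
  rw [dynDist_update_of_forall_ne hg π a h]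
  refine Finset.sum_congr rfl fun i _ => ?_
  rw [stepMap_update_iterate_of_forall_ne π a fun j _ => h j]

lemma reachesEverywhere_update (hg : ∀ a, T g a = g) {π : S → A} (hπ : ReachesEverywhere T g π)
    {t : S} {a : A} (hu : ∀ i, (stepMap T π)^[i] (T t a) ≠ t) :
    ReachesEverywhere T g (update π t a) := by
  have ht : dynDist T g (update π t a) t < ⊤ := by
    calc dynDist T g (update π t a) t
        ≤ dynDist T g (update π t a) ((stepMap T (update π t a))^[1] t) + 1 :=
          mod_cast dynDist_le_dynDist_iterate_add hg _ t 1
      _ = dynDist T g π (T t a) + 1 := by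
          rw [iterate_one, stepMap_update_self, dynDist_update_of_forall_ne hg π a hu]
      _ < ⊤ := ENat.add_lt_top.mpr ⟨hπ _, ENat.one_lt_top⟩
  intro s
  by_cases hvisit : ∃ j, (stepMap T π)^[j] s = t
  · have hfirst : (stepMap T (update π t a))^[Nat.find hvisit] s = t := by
      rw [stepMap_update_iterate_of_forall_ne π a fun i hi => Nat.find_min hvisit hi]
      exact Nat.find_spec hvisit
    calc dynDist T g (update π t a) s
        ≤ dynDist T g (update π t a) t + Nat.find hvisit :=
          (dynDist_le_dynDist_iterate_add hg _ s _).trans_eq (by rw [hfirst])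
      _ < ⊤ := ENat.add_lt_top.mpr ⟨ht, ENat.natCast_lt_top _⟩
  · push Not at hvisit
    rw [dynDist_update_of_forall_ne hg π a hvisit]
    exact hπ s

end update

lemma lossOf_eq_add_mul_lossOf_stepMap (hg : ∀ a, T g a = g) (γ : ℝ) (ρ : S → A)
    {σ : S → A} (hσ : ReachesEverywhere T g σ) {s : S} (hs : s ≠ g) :
    lossOf T g γ ρ σ s =
      (dynDist T g ρ s).toNat + γ * lossOf T g γ ρ σ (stepMap T σ s) := by
  unfold lossOf
  rw [dynDist_eq_dynDist_stepMap_add_one hg σ hs, ENat.toNat_add (hσ _).ne ENat.one_ne_top,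
    ENat.toNat_one, Finset.sum_range_succ', Finset.mul_sum, add_comm]
  congr 1
  · simp
  · refine Finset.sum_congr rfl fun i _ => ?_
    rw [iterate_succ_apply, pow_succ]
    ring

noncomputable def countdownLoss (γ : ℝ) (n : ℕ) : ℝ :=
  ∑ i ∈ Finset.range n, γ ^ i * ((n - i : ℕ) : ℝ)

lemma countdownLoss_strictMono {γ : ℝ} (hγ : 0 < γ) : StrictMono (countdownLoss γ) := by
  refine strictMono_nat_of_lt_succ fun n => ?_
  rw [countdownLoss, countdownLoss, Finset.sum_range_succ]
  have hle : ∑ i ∈ Finset.range n, γ ^ i * ((n - i : ℕ) : ℝ) ≤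
      ∑ i ∈ Finset.range n, γ ^ i * ((n + 1 - i : ℕ) : ℝ) := by
    gcongr with i
    omega
  have hlast : 0 < γ ^ n * ((n + 1 - n : ℕ) : ℝ) := by
    rw [Nat.add_sub_cancel_left]
    simpa using pow_pos hγ n
  linarith

lemma lossOf_self (hg : ∀ a, T g a = g) (γ : ℝ) (π : S → A) (s : S) :
    lossOf T g γ π π s = countdownLoss γ (dynDist T g π s).toNat := by
  refine Finset.sum_congr rfl fun i _ => ?_
  rw [dynDist_stepMap_iterate hg, ENat.toNat_sub (ENat.natCast_ne_top i), ENat.toNat_natCast]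

lemma OptimalWrt.of_dynDist_eq {γ : ℝ} {π π' : S → A} (hπ' : OptimalWrt T g γ π π')
    (heq : ∀ s, dynDist T g π' s = dynDist T g π s) : OptimalWrt T g γ π' π' := by
  have hloss : lossOf T g γ π = lossOf T g γ π' := by
    unfold lossOf
    simp only [heq]
  unfold OptimalWrt at hπ' ⊢
  rwa [← hloss]

theorem dynDist_le_dynDist_apply_add_one (hg : ∀ a, T g a = g) {γ : ℝ} (hγ : 0 < γ)
    {π : S → A} (hπ : OptimalWrt T g γ π π) (t : S) (a : A) :
    dynDist T g π t ≤ dynDist T g π (T t a) + 1 := by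
  classical
  by_cases hreturn : ∃ j, (stepMap T π)^[j] (T t a) = t
  · obtain ⟨j, hj⟩ := hreturn
    calc dynDist T g π t = dynDist T g π (T t a) - j := by
          rw [← dynDist_stepMap_iterate hg, hj]
      _ ≤ dynDist T g π (T t a) + 1 := tsub_le_self.trans le_self_add
  by_cases htg : t = g
  · simp [htg, dynDist_goal hg]
  push Not at hreturn
  have hreach := reachesEverywhere_update hg hπ.1 hreturn
  have hloss := hπ.2 _ hreach t
  rw [lossOf_eq_add_mul_lossOf_stepMap hg γ π hπ.1 htg,
    lossOf_eq_add_mul_lossOf_stepMap hg γ π hreach htg, stepMap_update_self,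
    lossOf_update_of_forall_ne hg γ π π a hreturn, lossOf_self hg, lossOf_self hg] at hloss
  have hcmp : (dynDist T g π (stepMap T π t)).toNat ≤ (dynDist T g π (T t a)).toNat :=
    (countdownLoss_strictMono hγ).le_iff_le.mp (le_of_mul_le_mul_left (by linarith) hγ)
  rw [dynDist_eq_dynDist_stepMap_add_one hg π htg, ← ENat.natCast_toNat (hπ.1 _).ne,
    ← ENat.natCast_toNat (hπ.1 (T t a)).ne]
  exact_mod_cast Nat.add_le_add_right hcmp 1

theorem dynDist_le_of_forall_le_apply_add_one (hg : ∀ a, T g a = g) {π : S → A}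
    (h : ∀ t a, dynDist T g π t ≤ dynDist T g π (T t a) + 1) (σ : S → A) (s : S) :
    dynDist T g π s ≤ dynDist T g σ s := by
  have hsteps : ∀ (n : ℕ) (s : S), dynDist T g π s ≤ dynDist T g π ((stepMap T σ)^[n] s) + n := by
    intro n
    induction n with
    | zero => simp
    | succ n ih =>
      intro s
      calc dynDist T g π s ≤ dynDist T g π (stepMap T σ s) + 1 := h s (σ s)
        _ ≤ dynDist T g π ((stepMap T σ)^[n] (stepMap T σ s)) + n + 1 := by gcongr; exact ih _
        _ = _ := by rw [iterate_succ_apply, Nat.cast_succ, add_assoc]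
  induction hσ : dynDist T g σ s using ENat.recTopCoe with
  | top => exact le_top
  | coe n =>
    have hn := (dynDist_le_natCast_iff hg σ s n).mp hσ.le
    simpa [hn, dynDist_goal hg] using hsteps n s

end

theorem stmt1_general {S A : Type*}
    (T : S → A → S) (g : S) (hg : ∀ a : A, T g a = g)
    (γ : ℝ) (hγ0 : 0 < γ)
    (π π' : S → A)
    (hπ' : OptimalWrt T g γ π π')
    (heq : ∀ s : S, dynDist T g π' s = dynDist T g π s) :
    ∀ s : S, dynDist T g π s = optDist T g s := by
  intro s
  rw [← heq]
  have hstep := dynDist_le_dynDist_apply_add_one hg hγ0 (hπ'.of_dynDist_eq heq)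
  exact le_antisymm (le_iInf fun σ => dynDist_le_of_forall_le_apply_add_one hg hstep σ s)
    (iInf_le _ π')

theorem stmt1 {S A : Type*} [Nonempty S] [Nonempty A]
    (T : S → A → S) (g : S) (hg : ∀ a : A, T g a = g)
    (γ : ℝ) (hγ0 : 0 < γ) (hγ1 : γ ≤ 1)
    (π π' : S → A)
    (hπ : ReachesEverywhere T g π)
    (hπ' : OptimalWrt T g γ π π')
    (heq : ∀ s : S, dynDist T g π' s = dynDist T g π s) :
    ∀ s : S, dynDist T g π s = optDist T g s :=
  stmt1_general T g hg γ hγ0 π π' hπ' heq
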